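/- Fix n ≥ 2 and w_1,…,w_n ≥ 2. If a behavior P in the scenario [(2 2),(w_1…w_n)] is nonnegative, normalized, no-signalling, and satisfies all lifted CHSH inequalities, then P is local. -/

import Mathlib

/-!
Bell scenario [(2 2),(w_1…w_n)]: party A has two measurements `x : Fin 2`, each with
outcomes `a : Fin 2` (the paper's labels "1","2" are the indices `0`,`1`), and party B
has `n` measurements `y : Fin n`, measurement `y` having outcomes `b : Fin (w y)`
(the paper's label `j ∈ {1,…,w_y}` is the index `j-1`).  A behavior is
`P : Fin 2 → (y : Fin n) → Fin 2 → Fin (w y) → ℝ`, with `P x y a b = P(ab|xy)`.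
-/

/-- The behavior `P` is nonnegative. -/
def Nonneg22 {n : ℕ} {w : Fin n → ℕ}
    (P : Fin 2 → (y : Fin n) → Fin 2 → Fin (w y) → ℝ) : Prop :=
  ∀ x y a b, 0 ≤ P x y a b

/-- The behavior `P` is normalized. -/
def Normalized22 {n : ℕ} {w : Fin n → ℕ}
    (P : Fin 2 → (y : Fin n) → Fin 2 → Fin (w y) → ℝ) : Prop :=
  ∀ x y, (∑ a, ∑ b, P x y a b) = 1

/-- The behavior `P` is no-signalling: A's marginals do not depend on `y` and B's
marginals do not depend on `x`. -/
def NoSignalling22 {n : ℕ} {w : Fin n → ℕ}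
    (P : Fin 2 → (y : Fin n) → Fin 2 → Fin (w y) → ℝ) : Prop :=
  (∀ (x : Fin 2) (a : Fin 2) (y y' : Fin n), (∑ b, P x y a b) = (∑ b, P x y' a b)) ∧
  (∀ (y : Fin n) (b : Fin (w y)) (x x' : Fin 2), (∑ a, P x y a b) = (∑ a, P x' y a b))

/-- `P` is a convex combination of deterministic behaviors, i.e. it is local. -/
def IsLocal22 {n : ℕ} {w : Fin n → ℕ}
    (P : Fin 2 → (y : Fin n) → Fin 2 → Fin (w y) → ℝ) : Prop :=
  ∃ q : (Fin 2 → Fin 2) → ((y : Fin n) → Fin (w y)) → ℝ,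
    (∀ α β, 0 ≤ q α β) ∧
    (∑ α, ∑ β, q α β) = 1 ∧
    (∀ (x : Fin 2) (y : Fin n) (a : Fin 2) (b : Fin (w y)),
      P x y a b = ∑ α, ∑ β,
        q α β * (if α x = a then 1 else 0) * (if β y = b then 1 else 0))

/-- `P_A(a|x)`, A's marginal probability of outcome `a` for measurement `x`,
computed using B's measurement `y` (independent of `y` for no-signalling behaviors). -/
noncomputable def PAm {n : ℕ} {w : Fin n → ℕ}
    (P : Fin 2 → (y : Fin n) → Fin 2 → Fin (w y) → ℝ) (a x : Fin 2) (y : Fin n) : ℝ :=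
  ∑ b, P x y a b

/-- `P_B(G|y) = Σ_{b∈G} P_B(b|y)`, computed using A's measurement `x = 0`
(independent of `x` for no-signalling behaviors). -/
noncomputable def PBm {n : ℕ} {w : Fin n → ℕ}
    (P : Fin 2 → (y : Fin n) → Fin 2 → Fin (w y) → ℝ) (y : Fin n)
    (G : Finset (Fin (w y))) : ℝ :=
  ∑ b ∈ G, ∑ a, P 0 y a b

/-- `P(aG|xy) = Σ_{b∈G} P(ab|xy)`. -/
noncomputable def PaG {n : ℕ} {w : Fin n → ℕ}
    (P : Fin 2 → (y : Fin n) → Fin 2 → Fin (w y) → ℝ) (a x : Fin 2) (y : Fin n)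
    (G : Finset (Fin (w y))) : ℝ :=
  ∑ b ∈ G, P x y a b

/-- `P` satisfies all lifted CHSH inequalities: for every ordered pair of distinct
measurements `y ≠ y'` of B and all nonempty `G ⊆ {1,…,w_y−1}`, `G' ⊆ {1,…,w_{y'}−1}`
(i.e. avoiding the last outcome),
`0 ≤ P_A(1|1) + P_B(G|y) − P(1G|1y) − P(1G|2y) − P(1G′|1y′) + P(1G′|2y′) ≤ 1` and
`0 ≤ P_A(1|2) + P_B(G|y) − P(1G|1y) − P(1G|2y) + P(1G′|1y′) − P(1G′|2y′) ≤ 1`. -/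
def LiftedCHSH {n : ℕ} {w : Fin n → ℕ}
    (P : Fin 2 → (y : Fin n) → Fin 2 → Fin (w y) → ℝ) : Prop :=
  ∀ (y y' : Fin n), y ≠ y' →
  ∀ (G : Finset (Fin (w y))) (G' : Finset (Fin (w y'))),
    G.Nonempty → G'.Nonempty →
    (∀ j ∈ G, (j : ℕ) + 1 < w y) → (∀ j ∈ G', (j : ℕ) + 1 < w y') →
    (0 ≤ PAm P 0 0 y + PBm P y G - PaG P 0 0 y G - PaG P 0 1 y G
          - PaG P 0 0 y' G' + PaG P 0 1 y' G' ∧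
     PAm P 0 0 y + PBm P y G - PaG P 0 0 y G - PaG P 0 1 y G
          - PaG P 0 0 y' G' + PaG P 0 1 y' G' ≤ 1) ∧
    (0 ≤ PAm P 0 1 y + PBm P y G - PaG P 0 0 y G - PaG P 0 1 y G
          + PaG P 0 0 y' G' - PaG P 0 1 y' G' ∧
     PAm P 0 1 y + PBm P y G - PaG P 0 0 y G - PaG P 0 1 y G
          + PaG P 0 0 y' G' - PaG P 0 1 y' G' ≤ 1)

/-!
A local model is a joint law of A's deterministic strategy `α : Fin 2 → Fin 2` and the outcomes
of all of B's measurements. For a single measurement `y` and outcome `b`, the numbers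
`P x y a b` are split among the four strategies as soon as the weight `t` of `α = (0, 0)` is
chosen, and the split is nonnegative exactly when `t` lies between the Fréchet bounds
`max 0 (P 1 y 0 b - P 0 y 1 b)` and `min (P 0 y 0 b) (P 1 y 0 b)`. Gluing the measurements of B
conditionally independently given `α` yields a local model provided `∑ b, t y b` is the same
number `s` for every `y`, i.e. provided the intervals between the summed Fréchet bounds of the
various `y` have a common point; for finitely many intervals it suffices that they meet pairwise.
For `y ≠ y'` the gap between the lower sum of `y` and the upper sum of `y'` is the lifted CHSH
expression (B) for the sets of outcomes where the bounds are not attained by `0` and by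
`P 1 y' 0 b`. These sets may be empty or contain the last outcome, but complementing `G` or `G'`
permutes the four lifted CHSH inequalities, so they hold for all `G` and `G'`.
-/

open Finset

section Coupling

variable {ι : Type*} [Fintype ι] [DecidableEq ι] {κ : ι → Type*} [∀ i, Fintype (κ i)]
  [∀ i, DecidableEq (κ i)]

theorem sum_pi_prod_mul_ite_eq {R : Type*} [CommSemiring R] {p : ∀ i, κ i → R}
    (hp : ∀ i, ∑ c, p i c = 1) (i : ι) (c : κ i) :
    ∑ β : ∀ i, κ i, (∏ j, p j (β j)) * (if β i = c then 1 else 0) = p i c := by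
  simp_rw [mul_ite, mul_one, mul_zero]
  rw [← sum_filter, ← Fintype.piFinset_univ,
    ← Fintype.piFinset_update_singleton_eq_filter_piFinset_eq (fun j => (univ : Finset (κ j))) i
      (mem_univ c), ← prod_univ_sum,
    prod_eq_single i (fun j _ hj => by simp [Function.update_of_ne hj, hp]) (by simp)]
  simp

theorem exists_pi_coupling {r : ℝ} (hr : 0 ≤ r) (Q : ∀ i, κ i → ℝ) (hQ : ∀ i c, 0 ≤ Q i c)
    (hQr : ∀ i, ∑ c, Q i c = r) :
    ∃ q : (∀ i, κ i) → ℝ, (∀ β, 0 ≤ q β) ∧ ∑ β, q β = r ∧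
      ∀ i c, ∑ β, q β * (if β i = c then 1 else 0) = Q i c := by
  rcases eq_or_ne r 0 with rfl | hr0
  · have hQ0 : ∀ i c, Q i c = 0 := fun i c =>
      (sum_eq_zero_iff_of_nonneg fun c _ => hQ i c).1 (hQr i) c (mem_univ c)
    exact ⟨0, fun _ => le_rfl, by simp, fun i c => by simp [hQ0]⟩
  have hp : ∀ i, ∑ c, Q i c / r = 1 := fun i => by rw [← sum_div, hQr, div_self hr0]
  refine ⟨fun β => r * ∏ i, Q i (β i) / r,
    fun β => mul_nonneg hr (prod_nonneg fun i _ => div_nonneg (hQ _ _) hr), ?_, fun i c => ?_⟩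
  · rw [← mul_sum, ← Fintype.prod_sum fun i c => Q i c / r, prod_congr rfl fun i _ => hp i,
      prod_const_one, mul_one]
  · simp_rw [mul_assoc, ← mul_sum, sum_pi_prod_mul_ite_eq hp]
    field_simp

end Coupling

theorem exists_forall_mem_Icc_of_le {ι : Type*} [Finite ι] {L U : ι → ℝ}
    (h : ∀ i j, L i ≤ U j) : ∃ s, ∀ i, s ∈ Set.Icc (L i) (U i) := by
  cases isEmpty_or_nonempty ι
  · exact ⟨0, isEmptyElim⟩
  · exact ⟨⨆ i, L i, fun i => ⟨le_ciSup (Finite.bddAbove_range L) i, ciSup_le fun j => h j i⟩⟩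

theorem exists_le_le_sum_eq {ι : Type*} [Fintype ι] {lo hi : ι → ℝ} (h : lo ≤ hi) {s : ℝ}
    (hs : s ∈ Set.Icc (∑ i, lo i) (∑ i, hi i)) :
    ∃ t : ι → ℝ, lo ≤ t ∧ t ≤ hi ∧ ∑ i, t i = s := by
  set c := (s - ∑ i, lo i) / (∑ i, hi i - ∑ i, lo i) with hc
  have hc0 : 0 ≤ c := div_nonneg (by linarith [hs.1]) (by linarith [hs.1, hs.2])
  have hc1 : c ≤ 1 := div_le_one_of_le₀ (by linarith [hs.2]) (by linarith [hs.1, hs.2])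
  refine ⟨fun i => lo i + c * (hi i - lo i), fun i => ?_, fun i => ?_, ?_⟩
  · nlinarith [h i]
  · nlinarith [h i]
  · rw [sum_add_distrib, ← mul_sum, sum_sub_distrib]
    rcases eq_or_ne (∑ i, hi i) (∑ i, lo i) with he | hne
    -- then `c = 0` by the convention `x / 0 = 0`, and `s` is squeezed to `∑ lo`
    · rw [hc, he, sub_self, div_zero]
      linarith [hs.1, hs.2]
    · rw [hc, div_mul_cancel₀ _ (sub_ne_zero.2 hne)]
      ring

theorem Finset.exists_eq_or_eq_compl_forall_succ_lt {m : ℕ} {T : Finset (Fin m)}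
    (hT : T.Nonempty) (hTc : Tᶜ.Nonempty) :
    ∃ T₀ : Finset (Fin m), T₀.Nonempty ∧ (∀ j ∈ T₀, (j : ℕ) + 1 < m) ∧ (T = T₀ ∨ T = T₀ᶜ) := by
  by_cases h : ∀ j ∈ T, (j : ℕ) + 1 < m
  · exact ⟨T, hT, h, Or.inl rfl⟩
  simp only [not_forall, not_lt] at h
  obtain ⟨j, hj, hjm⟩ := h
  refine ⟨Tᶜ, hTc, fun k hk => ?_, Or.inr (compl_compl T).symm⟩
  have hkj : (k : ℕ) ≠ j := Fin.val_ne_of_ne fun hkj => mem_compl.1 hk (hkj ▸ hj)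
  omega

/-- The joint law of two binary variables with `P(first = 0) = u`, `P(second = 0) = v`,
total mass `m` and `P(both = 0) = t`. It is nonnegative exactly between the Fréchet bounds
`max 0 (u + v - m) ≤ t ≤ min u v`. -/
def cornerTable (u v m t : ℝ) : Matrix (Fin 2) (Fin 2) ℝ :=
  !![t, u - t; v - t, m - u - v + t]

theorem cornerTable_nonneg {u v m t : ℝ} (h₀ : 0 ≤ t) (hm : u + v - m ≤ t) (hu : t ≤ u)
    (hv : t ≤ v) (i j : Fin 2) : 0 ≤ cornerTable u v m t i j := by
  fin_cases i <;> fin_cases j <;>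
    simp only [cornerTable, Matrix.of_apply, Matrix.cons_val', Matrix.cons_val_zero,
      Matrix.cons_val_one, Matrix.cons_val_fin_one, Fin.zero_eta, Fin.mk_one, Fin.isValue] <;>
    linarith

theorem sum_cornerTable (u v m t : ℝ) : ∑ i, ∑ j, cornerTable u v m t i j = m := by
  simp [cornerTable, Fin.sum_univ_two]

theorem sum_cornerTable_apply {β : Type*} (s : Finset β) (u v m t : β → ℝ) (i j : Fin 2) :
    ∑ b ∈ s, cornerTable (u b) (v b) (m b) (t b) i j =
      cornerTable (∑ b ∈ s, u b) (∑ b ∈ s, v b) (∑ b ∈ s, m b) (∑ b ∈ s, t b) i j := by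
  fin_cases i <;> fin_cases j <;> simp [cornerTable, sum_add_distrib, sum_sub_distrib]

theorem sum_fin_two_arrow {M : Type*} [AddCommMonoid M] (f : (Fin 2 → Fin 2) → M) :
    ∑ α, f α = ∑ i, ∑ j, f ![i, j] := by
  rw [← (finTwoArrowEquiv (Fin 2)).symm.sum_comp, Fintype.sum_prod_type]
  simp

theorem sum_ite_mul_cornerTable (u v m t : ℝ) (x a : Fin 2) :
    ∑ α : Fin 2 → Fin 2, (if α x = a then 1 else 0) * cornerTable u v m t (α 0) (α 1) =
      !![u, m - u; v, m - v] x a := by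
  rw [sum_fin_two_arrow]
  fin_cases x <;> fin_cases a <;>
    simp only [cornerTable, Matrix.of_apply, Matrix.cons_val', Matrix.cons_val_zero,
      Matrix.cons_val_one, Matrix.cons_val_fin_one, Fin.zero_eta, Fin.mk_one, Fin.isValue,
      Fin.sum_univ_two, zero_ne_one, one_ne_zero, if_true, if_false, one_mul, zero_mul, add_zero,
      zero_add] <;>
    ring

theorem sum_add_sum_sub_mem_Icc {β : Type*} [Fintype β] [DecidableEq β] {a c m : β → ℝ}
    (ha : 0 ≤ a) (hc : 0 ≤ c) (ham : a ≤ m) (hcm : c ≤ m) (hm : ∑ b, m b = 1) (S : Finset β) :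
    ∑ b, a b + ∑ b ∈ S, (c b - a b) ∈ Set.Icc 0 1 := by
  have hsplit : ∑ b, a b + ∑ b ∈ S, (c b - a b) = ∑ b ∈ Sᶜ, a b + ∑ b ∈ S, c b := by
    rw [← sum_compl_add_sum S a, sum_sub_distrib]
    ring
  rw [hsplit, Set.mem_Icc, ← hm, ← sum_compl_add_sum S m]
  exact ⟨add_nonneg (sum_nonneg fun b _ => ha b) (sum_nonneg fun b _ => hc b),
    add_le_add (sum_le_sum fun b _ => ham b) (sum_le_sum fun b _ => hcm b)⟩

/-- Fréchet bounds for the weight `t` of `α = (0, 0)` in the `cornerTable` that splits the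
slice `b` of B's measurement `y` among A's deterministic strategies `α`. -/
def frechetLower {n : ℕ} {w : Fin n → ℕ}
    (P : Fin 2 → (y : Fin n) → Fin 2 → Fin (w y) → ℝ) (y : Fin n) (b : Fin (w y)) : ℝ :=
  max 0 (P 1 y 0 b - P 0 y 1 b)

def frechetUpper {n : ℕ} {w : Fin n → ℕ}
    (P : Fin 2 → (y : Fin n) → Fin 2 → Fin (w y) → ℝ) (y : Fin n) (b : Fin (w y)) : ℝ :=
  min (P 0 y 0 b) (P 1 y 0 b)

/-- The expression of the lifted CHSH inequality (B), with `P_B(G|y) − P(1G|1y) − P(1G|2y)`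
collapsed to a single sum over `G`. -/
def chshForm {n : ℕ} {w : Fin n → ℕ}
    (P : Fin 2 → (y : Fin n) → Fin 2 → Fin (w y) → ℝ) (y y' : Fin n) (G : Finset (Fin (w y)))
    (S : Finset (Fin (w y'))) : ℝ :=
  ∑ b, P 1 y 0 b + ∑ b ∈ G, (P 0 y 1 b - P 1 y 0 b) + ∑ b ∈ S, (P 0 y' 0 b - P 1 y' 0 b)

section Bell

variable {n : ℕ} {w : Fin n → ℕ} {P : Fin 2 → (y : Fin n) → Fin 2 → Fin (w y) → ℝ}

theorem NoSignalling22.add_eq_add (hns : NoSignalling22 P) (y : Fin n) (b : Fin (w y)) :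
    P 0 y 0 b + P 0 y 1 b = P 1 y 0 b + P 1 y 1 b := by
  simpa [Fin.sum_univ_two] using hns.2 y b 0 1

theorem Normalized22.sum_add_sum (hnorm : Normalized22 P) (x : Fin 2) (y : Fin n) :
    ∑ b, P x y 0 b + ∑ b, P x y 1 b = 1 := by
  simpa [Fin.sum_univ_two] using hnorm x y

theorem frechetLower_le_frechetUpper (hpos : Nonneg22 P) (hns : NoSignalling22 P) (y : Fin n) :
    frechetLower P y ≤ frechetUpper P y := fun b => by
  have := hns.add_eq_add y b
  exact max_le (le_min (hpos 0 y 0 b) (hpos 1 y 0 b))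
    (le_min (by linarith [hpos 1 y 1 b]) (by linarith [hpos 0 y 1 b]))

theorem liftedB_eq_chshForm (y y' : Fin n) (G : Finset (Fin (w y))) (S : Finset (Fin (w y'))) :
    PAm P 0 1 y + PBm P y G - PaG P 0 0 y G - PaG P 0 1 y G + PaG P 0 0 y' S - PaG P 0 1 y' S =
      chshForm P y y' G S := by
  simp only [PAm, PBm, PaG, chshForm, Fin.sum_univ_two, sum_sub_distrib, sum_add_distrib]
  ring

theorem liftedA_eq_chshForm_compl (hns : NoSignalling22 P) (y y' : Fin n)
    (G : Finset (Fin (w y))) (S : Finset (Fin (w y'))) :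
    PAm P 0 0 y + PBm P y G - PaG P 0 0 y G - PaG P 0 1 y G - PaG P 0 0 y' S + PaG P 0 1 y' S =
      chshForm P y y' G Sᶜ := by
  have hcompl := sum_compl_add_sum S fun b => P 0 y' 0 b - P 1 y' 0 b
  have hF := hns.1 0 0 y y'
  have hV := hns.1 1 0 y y'
  simp only [PAm, PBm, PaG, chshForm, Fin.sum_univ_two, sum_sub_distrib, sum_add_distrib] at *
  linarith

theorem chshForm_compl_compl (hnorm : Normalized22 P) (hns : NoSignalling22 P) (y y' : Fin n)
    (G : Finset (Fin (w y))) (S : Finset (Fin (w y'))) :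
    chshForm P y y' Gᶜ Sᶜ = 1 - chshForm P y y' G S := by
  have hG := sum_compl_add_sum G fun b => P 0 y 1 b - P 1 y 0 b
  have hS := sum_compl_add_sum S fun b => P 0 y' 0 b - P 1 y' 0 b
  have hF := hns.1 0 0 y y'
  have hV := hns.1 1 0 y y'
  have h1 := hnorm.sum_add_sum 0 y
  simp only [chshForm, sum_sub_distrib] at *
  linarith

theorem chshForm_empty_left_mem_Icc (hpos : Nonneg22 P) (hnorm : Normalized22 P)
    (hns : NoSignalling22 P) (y y' : Fin n) (S : Finset (Fin (w y'))) :
    chshForm P y y' ∅ S ∈ Set.Icc 0 1 := by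
  rw [chshForm, sum_empty, add_zero, hns.1 1 0 y y']
  refine sum_add_sum_sub_mem_Icc (m := fun b => P 1 y' 0 b + P 1 y' 1 b) (fun b => hpos 1 y' 0 b)
    (fun b => hpos 0 y' 0 b) (fun b => ?_) (fun b => ?_) ?_ S
  · linarith [hpos 1 y' 1 b]
  · linarith [hpos 0 y' 1 b, hns.add_eq_add y' b]
  · rw [sum_add_distrib, hnorm.sum_add_sum]

theorem chshForm_empty_right_mem_Icc (hpos : Nonneg22 P) (hnorm : Normalized22 P)
    (hns : NoSignalling22 P) (y y' : Fin n) (G : Finset (Fin (w y))) :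
    chshForm P y y' G ∅ ∈ Set.Icc 0 1 := by
  rw [chshForm, sum_empty, add_zero]
  refine sum_add_sum_sub_mem_Icc (m := fun b => P 0 y 0 b + P 0 y 1 b) (fun b => hpos 1 y 0 b)
    (fun b => hpos 0 y 1 b) (fun b => ?_) (fun b => ?_) ?_ G
  · linarith [hpos 1 y 1 b, hns.add_eq_add y b]
  · linarith [hpos 0 y 0 b]
  · rw [sum_add_distrib, hnorm.sum_add_sum]

theorem chshForm_mem_Icc_of_liftedCHSH (hns : NoSignalling22 P) (hchsh : LiftedCHSH P)
    {y y' : Fin n} (hy : y ≠ y') {G : Finset (Fin (w y))} {S : Finset (Fin (w y'))}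
    (hG : G.Nonempty) (hS : S.Nonempty) (hGl : ∀ j ∈ G, (j : ℕ) + 1 < w y)
    (hSl : ∀ j ∈ S, (j : ℕ) + 1 < w y') :
    chshForm P y y' G S ∈ Set.Icc 0 1 ∧ chshForm P y y' G Sᶜ ∈ Set.Icc 0 1 := by
  obtain ⟨hA, hB⟩ := hchsh y y' hy G S hG hS hGl hSl
  rw [liftedA_eq_chshForm_compl hns] at hA
  rw [liftedB_eq_chshForm] at hB
  exact ⟨hB, hA⟩

theorem chshForm_mem_Icc (hpos : Nonneg22 P) (hnorm : Normalized22 P) (hns : NoSignalling22 P)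
    (hchsh : LiftedCHSH P) {y y' : Fin n} (hy : y ≠ y') (G : Finset (Fin (w y)))
    (S : Finset (Fin (w y'))) : chshForm P y y' G S ∈ Set.Icc 0 1 := by
  have hcompl := chshForm_compl_compl hnorm hns y y'
  rcases G.eq_empty_or_nonempty with rfl | hG
  · exact chshForm_empty_left_mem_Icc hpos hnorm hns y y' S
  rcases S.eq_empty_or_nonempty with rfl | hS
  · exact chshForm_empty_right_mem_Icc hpos hnorm hns y y' G
  rcases Gᶜ.eq_empty_or_nonempty with hGc | hGc
  · rw [compl_eq_empty_iff] at hGc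
    rw [hGc, ← compl_empty, ← compl_compl S, hcompl, ← Set.Icc.mem_iff_one_sub_mem]
    exact chshForm_empty_left_mem_Icc hpos hnorm hns y y' Sᶜ
  rcases Sᶜ.eq_empty_or_nonempty with hSc | hSc
  · rw [compl_eq_empty_iff] at hSc
    rw [hSc, ← compl_empty, ← compl_compl G, hcompl, ← Set.Icc.mem_iff_one_sub_mem]
    exact chshForm_empty_right_mem_Icc hpos hnorm hns y y' Gᶜ
  obtain ⟨G₀, hG₀, hG₀l, hGG₀⟩ := exists_eq_or_eq_compl_forall_succ_lt hG hGc
  obtain ⟨S₀, hS₀, hS₀l, hSS₀⟩ := exists_eq_or_eq_compl_forall_succ_lt hS hSc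
  obtain ⟨h, hc⟩ := chshForm_mem_Icc_of_liftedCHSH hns hchsh hy hG₀ hS₀ hG₀l hS₀l
  have h' : chshForm P y y' G₀ᶜ S₀ᶜ ∈ Set.Icc 0 1 := by
    rwa [hcompl, ← Set.Icc.mem_iff_one_sub_mem]
  have hc' : chshForm P y y' G₀ᶜ S₀ ∈ Set.Icc 0 1 := by
    rwa [← compl_compl S₀, hcompl, ← Set.Icc.mem_iff_one_sub_mem]
  rcases hGG₀ with rfl | rfl <;> rcases hSS₀ with rfl | rfl <;> assumption

theorem sum_frechetLower_le_sum_frechetUpper (hpos : Nonneg22 P) (hnorm : Normalized22 P)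
    (hns : NoSignalling22 P) (hchsh : LiftedCHSH P) (y y' : Fin n) :
    ∑ b, frechetLower P y b ≤ ∑ b, frechetUpper P y' b := by
  rcases eq_or_ne y y' with rfl | hy
  · exact sum_le_sum fun b _ => frechetLower_le_frechetUpper hpos hns y b
  have hlo : ∑ b, frechetLower P y b =
      ∑ b ∈ univ.filter (fun b => P 0 y 1 b < P 1 y 0 b), (P 1 y 0 b - P 0 y 1 b) := by
    rw [sum_filter]
    refine sum_congr rfl fun b _ => ?_
    split_ifs with h
    exacts [max_eq_right (by linarith), max_eq_left (by linarith)]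
  have hhi : ∑ b, frechetUpper P y' b = ∑ b, P 1 y' 0 b +
      ∑ b ∈ univ.filter (fun b => P 0 y' 0 b < P 1 y' 0 b), (P 0 y' 0 b - P 1 y' 0 b) := by
    rw [sum_filter, ← sum_add_distrib]
    refine sum_congr rfl fun b _ => ?_
    split_ifs with h
    · rw [frechetUpper, min_eq_left h.le]; ring
    · rw [frechetUpper, min_eq_right (by linarith)]; ring
  have hV := hns.1 1 0 y y'
  have := (chshForm_mem_Icc hpos hnorm hns hchsh hy
    (univ.filter fun b => P 0 y 1 b < P 1 y 0 b)
    (univ.filter fun b => P 0 y' 0 b < P 1 y' 0 b)).1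
  simp only [chshForm, sum_sub_distrib] at this hlo hhi
  linarith

theorem isLocal22_of_decomposition (Q : (Fin 2 → Fin 2) → (y : Fin n) → Fin (w y) → ℝ)
    (r : (Fin 2 → Fin 2) → ℝ) (hr : ∀ α, 0 ≤ r α) (hQ : ∀ α y b, 0 ≤ Q α y b)
    (hQr : ∀ α y, ∑ b, Q α y b = r α) (hr1 : ∑ α, r α = 1)
    (hP : ∀ x y a b, P x y a b = ∑ α, (if α x = a then 1 else 0) * Q α y b) :
    IsLocal22 P := by
  choose q hq hqr hqQ using fun α => exists_pi_coupling (hr α) (Q α) (hQ α) (hQr α)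
  refine ⟨q, hq, by simp_rw [hqr, hr1], fun x y a b => ?_⟩
  rw [hP]
  refine sum_congr rfl fun α _ => ?_
  have hcomm : ∀ β : (y : Fin n) → Fin (w y),
      q α β * (if α x = a then 1 else 0) * (if β y = b then 1 else 0) =
        (if α x = a then 1 else 0) * (q α β * if β y = b then 1 else 0) :=
    fun β => by ring
  rw [sum_congr rfl fun β _ => hcomm β, ← mul_sum, hqQ]

theorem isLocal22_of_frechet (hn : 0 < n) (hnorm : Normalized22 P) (hns : NoSignalling22 P)
    (t : (y : Fin n) → Fin (w y) → ℝ) (hlo : ∀ y, frechetLower P y ≤ t y)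
    (hhi : ∀ y, t y ≤ frechetUpper P y) {s : ℝ} (hts : ∀ y, ∑ b, t y b = s) :
    IsLocal22 P := by
  let y₀ : Fin n := ⟨0, hn⟩
  let Q : (Fin 2 → Fin 2) → (y : Fin n) → Fin (w y) → ℝ := fun α y b =>
    cornerTable (P 0 y 0 b) (P 1 y 0 b) (P 0 y 0 b + P 0 y 1 b) (t y b) (α 0) (α 1)
  let r : (Fin 2 → Fin 2) → ℝ := fun α =>
    cornerTable (∑ b, P 0 y₀ 0 b) (∑ b, P 1 y₀ 0 b) 1 s (α 0) (α 1)
  have hQ : ∀ α y b, 0 ≤ Q α y b := fun α y b => by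
    have hl := max_le_iff.1 (hlo y b)
    have hh := le_min_iff.1 (hhi y b)
    exact cornerTable_nonneg hl.1 (by linarith [hl.2]) hh.1 hh.2 _ _
  have hQr : ∀ α y, ∑ b, Q α y b = r α := fun α y => by
    simp only [Q, r]
    rw [sum_cornerTable_apply, sum_add_distrib, hnorm.sum_add_sum, hts, hns.1 0 0 y y₀,
      hns.1 1 0 y y₀]
  refine isLocal22_of_decomposition Q r (fun α => hQr α y₀ ▸ sum_nonneg fun b _ => hQ α y₀ b)
    hQ hQr ?_ fun x y a b => ?_
  · rw [sum_fin_two_arrow]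
    exact sum_cornerTable _ _ _ _
  · rw [sum_ite_mul_cornerTable]
    fin_cases x <;> fin_cases a <;>
      simp only [Matrix.of_apply, Matrix.cons_val', Matrix.cons_val_zero, Matrix.cons_val_one,
        Matrix.cons_val_fin_one, Fin.zero_eta, Fin.mk_one, Fin.isValue, add_sub_cancel_left]
    linarith [hns.add_eq_add y b]

end Bell

theorem CHSH_implies_local_general
    (n : ℕ) (hn : 2 ≤ n) (w : Fin n → ℕ)
    (P : Fin 2 → (y : Fin n) → Fin 2 → Fin (w y) → ℝ)
    (hpos : Nonneg22 P) (hnorm : Normalized22 P) (hns : NoSignalling22 P)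
    (hchsh : LiftedCHSH P) :
    IsLocal22 P := by
  obtain ⟨s, hs⟩ := exists_forall_mem_Icc_of_le
    (sum_frechetLower_le_sum_frechetUpper hpos hnorm hns hchsh)
  choose t hlo hhi hts using fun y =>
    exists_le_le_sum_eq (frechetLower_le_frechetUpper hpos hns y) (hs y)
  exact isLocal22_of_frechet (by omega) hnorm hns t hlo hhi hts

/-- if a behavior in the scenario [(2 2),(w_1…w_n)] is nonnegative,
normalized, no-signalling and satisfies all lifted CHSH inequalities, then it is local. -/
theorem CHSH_implies_local
    (n : ℕ) (hn : 2 ≤ n) (w : Fin n → ℕ) (hw : ∀ y, 2 ≤ w y)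
    (P : Fin 2 → (y : Fin n) → Fin 2 → Fin (w y) → ℝ)
    (hpos : Nonneg22 P) (hnorm : Normalized22 P) (hns : NoSignalling22 P)
    (hchsh : LiftedCHSH P) :
    IsLocal22 P :=
  CHSH_implies_local_general n hn w P hpos hnorm hns hchsh
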